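/- Let ε₀ > 0 and let κ : (0, ε₀) → ℂ be any function such that for every ε ∈ (0, ε₀) one has (α₊+2κ(ε))(α₋+2κ(ε)) = α₊α₋·e^{-4κ(ε)ε} and κ(ε) → κ₀ as ε → 0⁺. Then there exist ε₁ ∈ (0, ε₀] and C > 0 such that for all ε ∈ (0, ε₁), |(-κ(ε)²) - λ₀ + (α₊+α₋)α₊α₋·ε| ≤ C·ε²; that is, the eigenvalue λ_ε := -κ(ε)² satisfies λ_ε = λ₀ - (α₊+α₋)α₊α₋·ε + O(ε²) as ε → 0⁺. -/

import Mathlib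

/-!
Write `δ := κ + (α₊ + α₋)/2` and `z := -4κε`. The transcendental equation is equivalent to
`4κδ = α₊α₋(eᶻ - 1)`. As `κ → κ₀ ≠ 0`, `z = O(ε)` and `eᶻ - 1 = O(z)`, so `δ = O(ε)`.
Substituting back, `-κ² - λ₀ + (α₊ + α₋)α₊α₋ε = δ² + 2α₊α₋δε - α₊α₋(eᶻ - 1 - z)/2`,
and each of the three terms is `O(ε²)`.
-/

open Set Filter Asymptotics Topology

namespace Complex

lemma isBigO_exp_sub_one : (fun z : ℂ => exp z - 1) =O[𝓝 0] id :=
  .of_bound 2 <| by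
    filter_upwards [Metric.closedBall_mem_nhds (0 : ℂ) one_pos] with z hz
    exact norm_exp_sub_one_le (by simpa using hz)

lemma isBigO_exp_sub_one_sub_id : (fun z : ℂ => exp z - 1 - z) =O[𝓝 0] fun z => z ^ 2 :=
  .of_bound 1 <| by
    filter_upwards [Metric.closedBall_mem_nhds (0 : ℂ) one_pos] with z hz
    simpa using norm_exp_sub_one_sub_id_le (by simpa using hz)

end Complex

lemma exists_bound_of_isBigO_nhdsGT {E F : Type*} [Norm E] [SeminormedAddCommGroup F]
    {f : ℝ → E} {g : ℝ → F} (h : f =O[𝓝[>] 0] g) {ε₀ : ℝ} (hε₀ : 0 < ε₀) :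
    ∃ ε₁ : ℝ, 0 < ε₁ ∧ ε₁ ≤ ε₀ ∧ ∃ C > (0 : ℝ), ∀ ε ∈ Ioo (0 : ℝ) ε₁, ‖f ε‖ ≤ C * ‖g ε‖ := by
  obtain ⟨C, hC, hfg⟩ := h.exists_pos
  obtain ⟨ε', hε', hsub⟩ := mem_nhdsGT_iff_exists_Ioo_subset.mp hfg.bound
  exact ⟨min ε₀ ε', lt_min hε₀ hε', min_le_left _ _, C, hC,
    fun ε hε => hsub ⟨hε.1, hε.2.trans_le (min_le_right _ _)⟩⟩

namespace TwoDeltaEigenvalue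

variable {αp αm : ℂ} {κ : ℝ → ℂ} {ε : ℝ}

lemma shift_mul_eq
    (h : (αp + 2 * κ ε) * (αm + 2 * κ ε) = αp * αm * Complex.exp (-4 * κ ε * ε)) :
    (κ ε + (αp + αm) / 2) * (4 * κ ε) = αp * αm * (Complex.exp (-4 * κ ε * ε) - 1) := by
  linear_combination h

lemma eigenvalue_sub_eq
    (h : (αp + 2 * κ ε) * (αm + 2 * κ ε) = αp * αm * Complex.exp (-4 * κ ε * ε)) :
    -(κ ε) ^ 2 - (-(αp + αm) ^ 2 / 4) + (αp + αm) * αp * αm * ε =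
      (κ ε + (αp + αm) / 2) ^ 2 + 2 * (αp * αm) * (κ ε + (αp + αm) / 2) * ε
        - αp * αm / 2 * (Complex.exp (-4 * κ ε * ε) - 1 - -4 * κ ε * ε) := by
  linear_combination (-1 / 2 : ℂ) * h

variable {l : Filter ℝ} {c : ℂ}

lemma isBigO_exponent (hκ : Tendsto κ l (𝓝 c)) :
    (fun ε => -4 * κ ε * ε) =O[l] fun ε => (ε : ℂ) := by
  simpa using ((hκ.const_mul (-4)).isBigO_one ℂ).mul (isBigO_refl (fun ε : ℝ => (ε : ℂ)) l)

lemma tendsto_exponent (hl : l ≤ 𝓝 0) (hκ : Tendsto κ l (𝓝 c)) :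
    Tendsto (fun ε => -4 * κ ε * ε) l (𝓝 0) :=
  (isBigO_exponent hκ).trans_tendsto <| by
    simpa using (Complex.continuous_ofReal.tendsto 0).mono_left hl

variable (hl : l ≤ 𝓝 0) (hs : αp + αm ≠ 0)
  (heq : ∀ᶠ ε in l, (αp + 2 * κ ε) * (αm + 2 * κ ε) = αp * αm * Complex.exp (-4 * κ ε * ε))
  (hκ : Tendsto κ l (𝓝 (-(αp + αm) / 2)))
include hl hs heq hκ

lemma isBigO_shift : (fun ε => κ ε + (αp + αm) / 2) =O[l] fun ε => (ε : ℂ) := by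
  have hκ4 : Tendsto (fun ε => 4 * κ ε) l (𝓝 (4 * (-(αp + αm) / 2))) := hκ.const_mul 4
  have hlim_ne : 4 * (-(αp + αm) / 2) ≠ 0 :=
    mul_ne_zero (by norm_num) (div_ne_zero (neg_ne_zero.mpr hs) two_ne_zero)
  have hinv := (hκ4.inv₀ hlim_ne).isBigO_one ℂ
  have hexp := (Complex.isBigO_exp_sub_one.comp_tendsto (tendsto_exponent hl hκ)).trans
    (isBigO_exponent hκ)
  refine ((hexp.const_mul_left (αp * αm)).mul hinv).congr' ?_ (by simp)
  filter_upwards [heq, hκ4.eventually_ne hlim_ne] with ε hε hne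
  rw [Function.comp_apply, ← shift_mul_eq hε, mul_inv_cancel_right₀ hne]

lemma isBigO_eigenvalue_sub :
    (fun ε => -(κ ε) ^ 2 - (-(αp + αm) ^ 2 / 4) + (αp + αm) * αp * αm * ε) =O[l]
      fun ε => (ε : ℂ) ^ 2 := by
  have hδ := isBigO_shift hl hs heq hκ
  have hrem := (Complex.isBigO_exp_sub_one_sub_id.comp_tendsto (tendsto_exponent hl hκ)).trans
    ((isBigO_exponent hκ).pow 2)
  have hmid : (fun ε => 2 * (αp * αm) * (κ ε + (αp + αm) / 2) * ε) =O[l]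
      fun ε => (ε : ℂ) ^ 2 := by
    simpa [sq] using
      (hδ.const_mul_left (2 * (αp * αm))).mul (isBigO_refl (fun ε : ℝ => (ε : ℂ)) l)
  refine (((hδ.pow 2).add hmid).sub (hrem.const_mul_left (αp * αm / 2))).congr' ?_ .rfl
  filter_upwards [heq] with ε hε
  exact (eigenvalue_sub_eq hε).symm

end TwoDeltaEigenvalue

theorem stmt_6 (αp αm : ℂ) (hα : (αp + αm).re < 0) (ε₀ : ℝ) (hε₀ : 0 < ε₀)
    (κ : ℝ → ℂ)
    (heq : ∀ ε ∈ Ioo (0 : ℝ) ε₀,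
      (αp + 2 * κ ε) * (αm + 2 * κ ε) = αp * αm * Complex.exp (-4 * κ ε * ε))
    (hlim : Filter.Tendsto κ (nhdsWithin 0 (Ioi (0 : ℝ))) (nhds (-(αp + αm) / 2))) :
    ∃ ε₁ : ℝ, 0 < ε₁ ∧ ε₁ ≤ ε₀ ∧ ∃ C > (0 : ℝ), ∀ ε ∈ Ioo (0 : ℝ) ε₁,
      ‖-(κ ε) ^ 2 - (-(αp + αm) ^ 2 / 4) + (αp + αm) * αp * αm * ε‖ ≤
        C * ε ^ 2 := by
  have hs : αp + αm ≠ 0 := fun h => by simp [h] at hα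
  have hO := TwoDeltaEigenvalue.isBigO_eigenvalue_sub nhdsWithin_le_nhds hs
    (eventually_of_mem (Ioo_mem_nhdsGT hε₀) heq) hlim
  obtain ⟨ε₁, hε₁, hε₁₀, C, hC, hbound⟩ := exists_bound_of_isBigO_nhdsGT hO hε₀
  exact ⟨ε₁, hε₁, hε₁₀, C, hC, fun ε hε => (hbound ε hε).trans_eq (by simp)⟩
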